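/- arXiv:1611.10308 — 10 statements merged into one kernel-verified Lean document; each statement's English description precedes it below -/
import Mathlib

section
/- Let D be a principal ideal domain with quotient field K, and let B be an n×n matrix over D with minimal polynomial μ_B over K. Then μ_B has coefficients in D, and the set N(B) = {f ∈ D[X] : f(B) = 0} equals the principal ideal μ_B·D[X]. -/
/-!
Over `K` the minimal polynomial `μ_B` divides the characteristic polynomial of `B`, which is monic
with coefficients in `D`. Since `D` is integrally closed, a monic factor over `K` of a monic
polynomial over `D` has its coefficients in `D` (Gauss's lemma), so `μ_B ∈ D[X]` is monic. As `D`
embeds in `K`, `f(B) = 0` holds over `D` iff it holds over `K`, i.e. iff `μ_B ∣ f` in `K[X]`; and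
divisibility by a monic polynomial does not depend on the coefficient ring.
-/

open Polynomial

namespace Matrix

variable {ι R K : Type*} [Fintype ι] [DecidableEq ι] [CommRing R]

theorem aeval_map_algebraMap [CommRing K] [Algebra R K] (B : Matrix ι ι R) (f : R[X]) :
    aeval (B.map (algebraMap R K)) (f.map (algebraMap R K)) =
      (aeval B f).map (algebraMap R K) := by
  rw [Polynomial.aeval_map_algebraMap]
  exact aeval_algHom_apply (Algebra.ofId R K).mapMatrix B f

theorem aeval_eq_zero_iff_aeval_map_eq_zero [CommRing K] [Algebra R K]
    (hinj : Function.Injective (algebraMap R K)) (B : Matrix ι ι R) (f : R[X]) :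
    aeval B f = 0 ↔ aeval (B.map (algebraMap R K)) (f.map (algebraMap R K)) = 0 := by
  rw [aeval_map_algebraMap, ← (Matrix.map_injective hinj).eq_iff, Matrix.map_zero _ (map_zero _)]

theorem exists_monic_map_eq_minpoly [IsDomain R] [IsIntegrallyClosed R] [Field K] [Algebra R K]
    [IsFractionRing R K] (B : Matrix ι ι R) :
    ∃ μ : R[X], μ.Monic ∧ μ.map (algebraMap R K) = minpoly K (B.map (algebraMap R K)) := by
  set BK := B.map (algebraMap R K)
  have hmonic : (minpoly K BK).Monic :=
    minpoly.monic ⟨BK.charpoly, BK.charpoly_monic, BK.aeval_self_charpoly⟩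
  have hdvd : minpoly K BK ∣ B.charpoly.map (algebraMap R K) := by
    rw [← charpoly_map]
    exact minpoly.dvd K BK BK.aeval_self_charpoly
  obtain ⟨μ, hμ⟩ := IsIntegrallyClosed.eq_map_mul_C_of_dvd K B.charpoly_monic hdvd
  rw [hmonic.leadingCoeff, C_1, mul_one] at hμ
  exact ⟨μ, monic_of_injective (IsFractionRing.injective R K) (hμ ▸ hmonic), hμ⟩

end Matrix

theorem stmt0_general (D : Type*) [CommRing D] [IsDomain D] [IsPrincipalIdealRing D]
    (n : ℕ) (B : Matrix (Fin n) (Fin n) D) :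
    ∃ μD : Polynomial D,
      μD.map (algebraMap D (FractionRing D)) =
        minpoly (FractionRing D) (B.map (algebraMap D (FractionRing D))) ∧
      ∀ f : Polynomial D, Polynomial.aeval B f = 0 ↔ μD ∣ f := by
  have hinj := IsFractionRing.injective D (FractionRing D)
  obtain ⟨μ, hmonic, hμ⟩ := B.exists_monic_map_eq_minpoly (K := FractionRing D)
  refine ⟨μ, hμ, fun f => ?_⟩
  rw [B.aeval_eq_zero_iff_aeval_map_eq_zero hinj, ← map_dvd_map _ hinj hmonic, hμ,
    minpoly.dvd_iff]

theorem stmt0 (D : Type*) [CommRing D] [IsDomain D] [IsPrincipalIdealRing D]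
    (n : ℕ) (hn : 0 < n) (B : Matrix (Fin n) (Fin n) D) :
    ∃ μD : Polynomial D,
      μD.map (algebraMap D (FractionRing D)) =
        minpoly (FractionRing D) (B.map (algebraMap D (FractionRing D))) ∧
      ∀ f : Polynomial D, Polynomial.aeval B f = 0 ↔ μD ∣ f :=
  stmt0_general D n B
end

section
/- Let R be a commutative ring with unity and C ∈ M_n(R). Then a polynomial f ∈ R[X] satisfies f(C) = 0 if and only if there exists Q ∈ M_n(R[X]) such that adj(X·I − C)·f(X) = Q(X)·χ_C(X), where adj denotes the adjugate matrix and χ_C the characteristic polynomial of C. -/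
/-!
Write `N = X • 1 - C` for the characteristic matrix, so that `adj N * N = N * adj N = χ_C • 1`.
Under `Mₙ(R[X]) ≃ Mₙ(R)[X]`, `N` becomes `X - C`, so `f(C) = 0` says exactly that `f • 1 = Q * N`
for some `Q`: the factor theorem holds in `Mₙ(R)[X]` because the coefficients of `f` are
central. Multiplying by `adj N` on the right turns `f • 1 = Q * N` into `f • adj N = χ_C • Q`.
To go back, multiply by `N` and cancel `χ_C`, which is monic and hence a nonzerodivisor.
-/

open Polynomial Matrix

theorem Polynomial.exists_map_algebraMap_sub_C_aeval_eq_mul_X_sub_C {R A : Type*} [CommRing R]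
    [Ring A] [Algebra R A] (a : A) (f : R[X]) :
    ∃ q : A[X], f.map (algebraMap R A) - C (aeval a f) = q * (X - C a) := by
  -- Factor `f(X) - f(Y)` in the commutative ring `R[Y][X]`, then substitute `Y := a` coefficientwise;
  -- `Polynomial.map` is multiplicative even though `A` is not commutative.
  obtain ⟨h, hh⟩ := X_sub_C_dvd_sub_C_eval (p := f.map (C : R →+* R[X])) (a := X)
  rw [eval_map, eval₂_C_X] at hh
  let φ : R[X] →+* A := (aeval a : R[X] →ₐ[R] A)
  have hφ : φ.comp C = algebraMap R A := RingHom.ext (aeval_C a)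
  refine ⟨h.map φ, ?_⟩
  have hmap := congrArg (map φ) (hh.trans (mul_comm _ _))
  rw [Polynomial.map_sub, Polynomial.map_map, hφ, map_C, Polynomial.map_mul, Polynomial.map_sub,
    map_X, map_C] at hmap
  simpa only [φ, RingHom.coe_coe, aeval_X] using hmap

theorem Polynomial.aeval_eq_zero_iff_exists_map_algebraMap_eq_mul_X_sub_C {R A : Type*}
    [CommRing R] [Ring A] [Algebra R A] (a : A) (f : R[X]) :
    aeval a f = 0 ↔ ∃ q : A[X], f.map (algebraMap R A) = q * (X - C a) := by
  constructor
  · intro hf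
    simpa only [hf, C_0, sub_zero] using exists_map_algebraMap_sub_C_aeval_eq_mul_X_sub_C a f
  · rintro ⟨q, hq⟩
    rw [← eval_map_algebraMap, hq, eval_mul_X_sub_C]

theorem Matrix.aeval_eq_zero_iff_exists_smul_one_eq_mul_charmatrix {R n : Type*} [CommRing R]
    [Fintype n] [DecidableEq n] (M : Matrix n n R) (f : R[X]) :
    aeval M f = 0 ↔ ∃ Q : Matrix n n R[X], f • (1 : Matrix n n R[X]) = Q * charmatrix M := by
  rw [aeval_eq_zero_iff_exists_map_algebraMap_eq_mul_X_sub_C]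
  refine matPolyEquiv.surjective.exists.trans (exists_congr fun Q => ?_)
  rw [← matPolyEquiv_smul_one, ← matPolyEquiv_charmatrix, ← _root_.map_mul,
    matPolyEquiv.injective.eq_iff]

theorem Matrix.exists_smul_one_eq_mul_iff_exists_smul_adjugate_eq_det_smul {S n : Type*}
    [CommRing S] [Fintype n] [DecidableEq n] (A : Matrix n n S) (hA : IsLeftRegular A.det)
    (c : S) :
    (∃ Q : Matrix n n S, c • (1 : Matrix n n S) = Q * A) ↔
      ∃ Q : Matrix n n S, c • A.adjugate = A.det • Q := by
  refine exists_congr fun Q => ⟨fun h => ?_, fun h => hA.matrix ?_⟩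
  · calc c • A.adjugate = (c • 1) * A.adjugate := by rw [smul_one_mul]
      _ = A.det • Q := by rw [h, mul_assoc, mul_adjugate, mul_smul_comm, mul_one]
  · calc A.det • c • (1 : Matrix n n S) = c • A.adjugate * A := by
          rw [smul_mul_assoc, adjugate_mul, smul_comm]
      _ = A.det • (Q * A) := by rw [h, smul_mul_assoc]

theorem stmt1 (R : Type*) [CommRing R] (n : ℕ) (M : Matrix (Fin n) (Fin n) R)
    (f : Polynomial R) :
    Polynomial.aeval M f = 0 ↔
      ∃ Q : Matrix (Fin n) (Fin n) (Polynomial R),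
        f • (Matrix.charmatrix M).adjugate = M.charpoly • Q :=
  (aeval_eq_zero_iff_exists_smul_one_eq_mul_charmatrix M f).trans
    (exists_smul_one_eq_mul_iff_exists_smul_adjugate_eq_det_smul _
      M.charpoly_monic.isRegular.left f)
end

section
/- Let D be a principal ideal domain, p ∈ D prime, B ∈ M_n(D), and t ≥ 1. Then N_{(p^t)}(B) ∩ p·D[X] = p·N_{(p^{t-1})}(B). -/
open Polynomial Matrix

section MatrixAeval

variable {R ι : Type*} [CommRing R] [Fintype ι] [DecidableEq ι] (B : Matrix ι ι R)

theorem Matrix.aeval_C_mul_apply (a : R) (g : R[X]) (i j : ι) :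
    aeval B (C a * g) i j = a * aeval B g i j := by
  simp [← smul_eq_C_mul]

theorem Matrix.mul_dvd_aeval_C_mul_apply_iff [IsDomain R] {a : R} (ha : a ≠ 0) (b : R)
    (g : R[X]) (i j : ι) :
    a * b ∣ aeval B (C a * g) i j ↔ b ∣ aeval B g i j := by
  rw [aeval_C_mul_apply, mul_dvd_mul_iff_left ha]

end MatrixAeval

theorem stmt5_general (D : Type*) [CommRing D] [IsDomain D]
    (n : ℕ) (p : D) (hp : Prime p) (B : Matrix (Fin n) (Fin n) D)
    (t : ℕ) (ht : 1 ≤ t) (f : Polynomial D) :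
    ((∀ i j, p ^ t ∣ Polynomial.aeval B f i j) ∧ ∀ k, p ∣ f.coeff k) ↔
      ∃ g : Polynomial D, (∀ i j, p ^ (t - 1) ∣ Polynomial.aeval B g i j) ∧
        f = Polynomial.C p * g := by
  rw [← mul_pow_sub_one (by omega : t ≠ 0) p]
  constructor
  · rintro ⟨hf, hcoeff⟩
    obtain ⟨g, rfl⟩ := (C_dvd_iff_dvd_coeff p f).mpr hcoeff
    exact ⟨g, fun i j => (mul_dvd_aeval_C_mul_apply_iff B hp.ne_zero _ g i j).mp (hf i j), rfl⟩
  · rintro ⟨g, hg, rfl⟩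
    refine ⟨fun i j => (mul_dvd_aeval_C_mul_apply_iff B hp.ne_zero _ g i j).mpr (hg i j), ?_⟩
    exact (C_dvd_iff_dvd_coeff p _).mp (dvd_mul_right _ _)

theorem stmt5 (D : Type*) [CommRing D] [IsDomain D] [IsPrincipalIdealRing D]
    (n : ℕ) (p : D) (hp : Prime p) (B : Matrix (Fin n) (Fin n) D)
    (t : ℕ) (ht : 1 ≤ t) (f : Polynomial D) :
    ((∀ i j, p ^ t ∣ Polynomial.aeval B f i j) ∧ ∀ k, p ∣ f.coeff k) ↔
      ∃ g : Polynomial D, (∀ i j, p ^ (t - 1) ∣ Polynomial.aeval B g i j) ∧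
        f = Polynomial.C p * g :=
  stmt5_general D n p hp B t ht f
end

section
/- Let D be a principal ideal domain, p ∈ D prime, B ∈ M_n(D), t ≥ 1, and ν ∈ D[X] a monic polynomial. If N_{(p^t)}(B) = (ν) + p·N_{(p^{t-1})}(B), then ν is a (p^t)-minimal polynomial of B, i.e., every monic polynomial f ∈ N_{(p^t)}(B) satisfies deg(f) ≥ deg(ν). -/
/-!
Reducing modulo `p` kills the term `p·h`, so `ν̄` divides `f̄` in `(D/p)[X]`. Both are monic, so
their degrees are those of `ν` and `f`, and a monic divisor of a nonzero polynomial cannot have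
larger degree.
-/

open Polynomial Matrix

namespace Polynomial

variable {R : Type*} [CommRing R]

theorem Monic.natDegree_le_of_dvd [Nontrivial R] {ν f : R[X]} (hν : ν.Monic) (hf : f.Monic)
    (hdvd : ν ∣ f) : ν.natDegree ≤ f.natDegree :=
  not_lt.mp fun hlt => hν.not_dvd_of_natDegree_lt hf.ne_zero hlt hdvd

theorem Monic.natDegree_le_of_eq_mul_add_C_mul {p : R} (hp : ¬IsUnit p) {f g h ν : R[X]}
    (hf : f.Monic) (hν : ν.Monic) (hfeq : f = g * ν + C p * h) :
    ν.natDegree ≤ f.natDegree := by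
  set q := Ideal.Quotient.mk (Ideal.span {p})
  have : Nontrivial (R ⧸ Ideal.span {p}) :=
    Ideal.Quotient.nontrivial_iff.mpr (mt Ideal.span_singleton_eq_top.mp hp)
  have hqp : q p = 0 := Ideal.Quotient.eq_zero_iff_mem.mpr (Ideal.mem_span_singleton_self p)
  have hdvd : ν.map q ∣ f.map q :=
    ⟨g.map q, by rw [hfeq, Polynomial.map_add, Polynomial.map_mul, Polynomial.map_mul, map_C,
      hqp, C_0, zero_mul, add_zero, mul_comm]⟩
  rw [← hν.natDegree_map q, ← hf.natDegree_map q]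
  exact (hν.map q).natDegree_le_of_dvd (hf.map q) hdvd

end Polynomial

theorem stmt6_general (D : Type*) [CommRing D]
    (n : ℕ) (p : D) (hp : Prime p) (B : Matrix (Fin n) (Fin n) D)
    (t : ℕ) (ν : Polynomial D) (hν : ν.Monic)
    (hgen : ∀ f : Polynomial D, (∀ i j, p ^ t ∣ Polynomial.aeval B f i j) ↔
      ∃ g h : Polynomial D, (∀ i j, p ^ (t - 1) ∣ Polynomial.aeval B h i j) ∧
        f = g * ν + Polynomial.C p * h) :
    ∀ f : Polynomial D, f.Monic → (∀ i j, p ^ t ∣ Polynomial.aeval B f i j) →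
      ν.natDegree ≤ f.natDegree := by
  intro f hf hfN
  obtain ⟨g, h, -, hfeq⟩ := (hgen f).mp hfN
  exact hf.natDegree_le_of_eq_mul_add_C_mul hp.not_isUnit hν hfeq

theorem stmt6 (D : Type*) [CommRing D] [IsDomain D] [IsPrincipalIdealRing D]
    (n : ℕ) (p : D) (hp : Prime p) (B : Matrix (Fin n) (Fin n) D)
    (t : ℕ) (ht : 1 ≤ t) (ν : Polynomial D) (hν : ν.Monic)
    (hgen : ∀ f : Polynomial D, (∀ i j, p ^ t ∣ Polynomial.aeval B f i j) ↔
      ∃ g h : Polynomial D, (∀ i j, p ^ (t - 1) ∣ Polynomial.aeval B h i j) ∧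
        f = g * ν + Polynomial.C p * h) :
    ∀ f : Polynomial D, f.Monic → (∀ i j, p ^ t ∣ Polynomial.aeval B f i j) →
      ν.natDegree ≤ f.natDegree :=
  stmt6_general D n p hp B t ν hν hgen
end

section
/- Let D be a principal ideal domain, p ∈ D prime, t ≥ 1, B ∈ M_n(D), ν_{t-1} a (p^{t-1})-minimal polynomial of B, and f ∈ N_{(p^t)}(B) with f ∉ p·D[X]. Write f = f₁ + p·f₂ where no nonzero coefficient of f₁ is divisible by p, and let r be the remainder of f₂ upon division by ν_{t-1}. Then deg(f₁ + p·r) = deg(f₁), p does not divide the leading coefficient of f₁ + p·r, and deg(f₁) ≥ deg(ν_{t-1}) > deg(r). -/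
/-!
The polynomial `f₁ + p r` differs from `f` by the multiple `p (f₂ /ₘ ν) ν` of `ν`, so it lies in
`N_{(p^{t-1})}(B)`. An element `h` of `N_{(p^s)}(B)` of degree below that of a `(p^s)`-minimal
polynomial `ν` has all its coefficients divisible by `p`. Indeed, if its leading coefficient is
prime to `p`, a Bezout combination of `h` and `p^s X^{deg h}` is a monic element of `N_{(p^s)}(B)`
of smaller degree than `ν`; otherwise `h X^m - lc(h) ν` (with `m = deg ν - deg h`) is again such
an element, and it carries a coefficient prime to `p` at a strictly higher index. Since the
leading coefficient of `f₁` is prime to `p`, `f₁ + p r` cannot have degree below `deg ν`, which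
forces `deg f₁ ≥ deg ν > deg (p r)`.
-/

open Polynomial Matrix

section NullIdeal

variable {R : Type*} [CommRing R] {n : Type*} [Fintype n] [DecidableEq n]

/-- The ideal `N_{(a)}(B)` of polynomials `f` with `f(B) ≡ 0 mod a`. -/
def nullIdeal (B : Matrix n n R) (a : R) : Ideal R[X] where
  carrier := {f | ∀ i j, a ∣ aeval B f i j}
  add_mem' hf hg i j := by
    simpa only [map_add, Matrix.add_apply] using dvd_add (hf i j) (hg i j)
  zero_mem' i j := by simp
  smul_mem' c f hf i j := by
    rw [smul_eq_mul, map_mul, Matrix.mul_apply]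
    exact Finset.dvd_sum fun l _ => (hf l j).mul_left _

/-- `ν` is an `(a)`-minimal polynomial of `B`. -/
def IsNullMinimal (B : Matrix n n R) (a : R) (ν : R[X]) : Prop :=
  ν.Monic ∧ ν ∈ nullIdeal B a ∧
    ∀ g : R[X], g.Monic → g ∈ nullIdeal B a → ν.natDegree ≤ g.natDegree

variable {B : Matrix n n R}

theorem nullIdeal_anti {a b : R} (hab : a ∣ b) : nullIdeal B b ≤ nullIdeal B a :=
  fun _ hf i j => hab.trans (hf i j)

theorem C_mul_mem_nullIdeal (a : R) (f : R[X]) : C a * f ∈ nullIdeal B a := fun i j => by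
  rw [← smul_eq_C_mul, map_smul, Matrix.smul_apply, smul_eq_mul]
  exact dvd_mul_right _ _

theorem exists_monic_mem_nullIdeal_of_isCoprime {a : R} {h : R[X]} (hh : h ∈ nullIdeal B a)
    (hcop : IsCoprime h.leadingCoeff a) :
    ∃ g : R[X], g.Monic ∧ g ∈ nullIdeal B a ∧ g.natDegree ≤ h.natDegree := by
  obtain ⟨u, v, huv⟩ := hcop
  set g := C u * h + C a * (C v * X ^ h.natDegree)
  have hg_deg : g.natDegree ≤ h.natDegree :=
    natDegree_add_le_of_degree_le (natDegree_C_mul_le _ _)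
      ((natDegree_C_mul_le _ _).trans (natDegree_C_mul_X_pow_le _ _))
  have hg_coeff : g.coeff h.natDegree = 1 := by
    simp only [g, coeff_add, coeff_C_mul, coeff_X_pow_self, coeff_natDegree]
    linear_combination huv
  exact ⟨g, monic_of_natDegree_le_of_coeff_eq_one _ hg_deg hg_coeff,
    Ideal.add_mem _ (Ideal.mul_mem_left _ _ hh) (C_mul_mem_nullIdeal _ _), hg_deg⟩

end NullIdeal

theorem degree_mul_X_pow_sub_C_leadingCoeff_mul_lt {D : Type*} [CommRing D] [IsDomain D]
    {h ν : D[X]} (hν : ν.Monic) (hh : h ≠ 0) (hlt : h.natDegree ≤ ν.natDegree) :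
    (h * X ^ (ν.natDegree - h.natDegree) - C h.leadingCoeff * ν).degree < ν.degree := by
  have hdeg : (h * X ^ (ν.natDegree - h.natDegree)).degree = ν.degree := by
    rw [degree_mul_X_pow, degree_eq_natDegree hh, degree_eq_natDegree hν.ne_zero]
    norm_cast
    omega
  have hlc : (h * X ^ (ν.natDegree - h.natDegree)).leadingCoeff =
      (C h.leadingCoeff * ν).leadingCoeff := by
    rw [leadingCoeff_mul_X_pow, leadingCoeff_mul_monic hν, leadingCoeff_C]
  rw [← hdeg]
  refine degree_sub_lt_left ?_ (mul_ne_zero hh (pow_ne_zero _ X_ne_zero)) hlc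
  rw [hdeg, degree_C_mul (leadingCoeff_ne_zero.2 hh)]

section MinimalPolynomial

variable {D : Type*} [CommRing D] [IsDomain D] [IsPrincipalIdealRing D]
  {n : Type*} [Fintype n] [DecidableEq n] {B : Matrix n n D}

theorem IsNullMinimal.dvd_coeff_of_degree_lt {p : D} (hp : Prime p) {s : ℕ} {ν : D[X]}
    (hν : IsNullMinimal B (p ^ s) ν) {h : D[X]} (hh : h ∈ nullIdeal B (p ^ s))
    (hdeg : h.degree < ν.degree) (j : ℕ) : p ∣ h.coeff j := by
  by_contra hj
  have hj0 : h.coeff j ≠ 0 := fun h0 => hj (h0 ▸ dvd_zero p)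
  have hh0 : h ≠ 0 := fun h0 => hj0 (by rw [h0, coeff_zero])
  have hlt : h.natDegree < ν.natDegree := natDegree_lt_natDegree hh0 hdeg
  by_cases hlc : p ∣ h.leadingCoeff
  · have hjd : j < h.natDegree :=
      (le_natDegree_of_ne_zero hj0).lt_of_ne fun hjd => hj (hjd ▸ hlc)
    have hshift := hν.dvd_coeff_of_degree_lt hp
      (Ideal.sub_mem _ (Ideal.mul_mem_right _ _ hh) (Ideal.mul_mem_left _ _ hν.2.1))
      (degree_mul_X_pow_sub_C_leadingCoeff_mul_lt hν.1 hh0 hlt.le)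
      (j + (ν.natDegree - h.natDegree))
    rw [coeff_sub, coeff_mul_X_pow, coeff_C_mul] at hshift
    exact hj ((dvd_sub_left (hlc.mul_right _)).1 hshift)
  · obtain ⟨g, hg, hgN, hg_deg⟩ := exists_monic_mem_nullIdeal_of_isCoprime hh
      ((hp.coprime_iff_not_dvd.2 hlc).symm.pow_right)
    exact absurd (hν.2.2 g hg hgN) (by omega)
termination_by ν.natDegree - j
decreasing_by omega

end MinimalPolynomial

theorem stmt7_general (D : Type*) [CommRing D] [IsDomain D] [IsPrincipalIdealRing D]
    (n : ℕ) (p : D) (hp : Prime p) (B : Matrix (Fin n) (Fin n) D)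
    (t : ℕ) (ν : Polynomial D)
    (hν : ν.Monic ∧ (∀ i j, p ^ (t - 1) ∣ Polynomial.aeval B ν i j) ∧
      ∀ g : Polynomial D, g.Monic → (∀ i j, p ^ (t - 1) ∣ Polynomial.aeval B g i j) →
        ν.natDegree ≤ g.natDegree)
    (f f₁ f₂ : Polynomial D)
    (hf : ∀ i j, p ^ t ∣ Polynomial.aeval B f i j)
    (hfp : ¬ ∀ k, p ∣ f.coeff k)
    (hsplit : f = f₁ + Polynomial.C p * f₂)
    (hf₁ : ∀ k, f₁.coeff k ≠ 0 → ¬ p ∣ f₁.coeff k) :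
    (f₁ + Polynomial.C p * (f₂ %ₘ ν)).degree = f₁.degree ∧
    ¬ p ∣ (f₁ + Polynomial.C p * (f₂ %ₘ ν)).leadingCoeff ∧
    ν.degree ≤ f₁.degree ∧ (f₂ %ₘ ν).degree < ν.degree := by
  have hν : IsNullMinimal B (p ^ (t - 1)) ν := hν
  set r := f₂ %ₘ ν with hr_def
  have hr : r.degree < ν.degree := degree_modByMonic_lt f₂ hν.1
  have hf₁0 : f₁ ≠ 0 := by
    rintro rfl
    exact hfp fun k => by simp [hsplit, coeff_C_mul]
  have hlc : ¬ p ∣ f₁.leadingCoeff := hf₁ _ (leadingCoeff_ne_zero.2 hf₁0)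
  have hN : f₁ + C p * r ∈ nullIdeal B (p ^ (t - 1)) := by
    rw [show f₁ + C p * r = f - C p * (f₂ /ₘ ν) * ν by
      rw [hr_def, modByMonic_eq_sub_mul_div f₂ ν, hsplit]; ring]
    exact Ideal.sub_mem _ (nullIdeal_anti (pow_dvd_pow p (t.sub_le 1)) hf)
      (Ideal.mul_mem_left _ _ hν.2.1)
  have hpr : (C p * r).degree < ν.degree := by rwa [degree_C_mul hp.ne_zero]
  have hνf₁ : ν.degree ≤ f₁.degree := by
    by_contra! hlt
    have hdvd := hν.dvd_coeff_of_degree_lt hp hN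
      ((degree_add_le _ _).trans_lt (max_lt hlt hpr)) f₁.natDegree
    rw [coeff_add, coeff_C_mul, coeff_natDegree] at hdvd
    exact hlc ((dvd_add_left (dvd_mul_right p _)).1 hdvd)
  have hpr₁ := hpr.trans_le hνf₁
  exact ⟨degree_add_eq_left_of_degree_lt hpr₁,
    by rwa [leadingCoeff_add_of_degree_lt' hpr₁], hνf₁, hr⟩

theorem stmt7 (D : Type*) [CommRing D] [IsDomain D] [IsPrincipalIdealRing D]
    (n : ℕ) (p : D) (hp : Prime p) (B : Matrix (Fin n) (Fin n) D)
    (t : ℕ) (ht : 1 ≤ t) (ν : Polynomial D)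
    (hν : ν.Monic ∧ (∀ i j, p ^ (t - 1) ∣ Polynomial.aeval B ν i j) ∧
      ∀ g : Polynomial D, g.Monic → (∀ i j, p ^ (t - 1) ∣ Polynomial.aeval B g i j) →
        ν.natDegree ≤ g.natDegree)
    (f f₁ f₂ : Polynomial D)
    (hf : ∀ i j, p ^ t ∣ Polynomial.aeval B f i j)
    (hfp : ¬ ∀ k, p ∣ f.coeff k)
    (hsplit : f = f₁ + Polynomial.C p * f₂)
    (hf₁ : ∀ k, f₁.coeff k ≠ 0 → ¬ p ∣ f₁.coeff k) :
    (f₁ + Polynomial.C p * (f₂ %ₘ ν)).degree = f₁.degree ∧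
    ¬ p ∣ (f₁ + Polynomial.C p * (f₂ %ₘ ν)).leadingCoeff ∧
    ν.degree ≤ f₁.degree ∧ (f₂ %ₘ ν).degree < ν.degree :=
  stmt7_general D n p hp B t ν hν f f₁ f₂ hf hfp hsplit hf₁
end

section
/- Let D be a principal ideal domain, p ∈ D prime, t ≥ 1, B ∈ M_n(D), ν_{t-1} a (p^{t-1})-minimal polynomial of B, ν_t a (p^t)-minimal polynomial, and f ∈ N_{(p^t)}(B) with f ∉ p·D[X]. Then deg(f) ≥ deg(ν_t) ≥ deg(ν_{t-1}). -/
/-!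
Write `N_t` for `N_{(p^t)}(B)`; it contains `p^t` and `p • N_{t-1}`. By induction on `t` and
then on `deg f`, a polynomial `f ∈ N_t` not divisible by `p` has a monic companion in `N_t` of
degree at most `deg f`. If `p ∤ lc f`, then `lc f` is invertible modulo `p^t` (as `D` is a PID),
so `v f + u p^t X^{deg f}` is monic for a Bézout relation `u p^t + v lc f = 1`. If `p ∣ lc f`,
subtracting `(lc f) X^k ν` with `ν` monic in `N_{t-1}` of degree at most `deg f` (induction on
`t`) kills the leading term, stays in `N_t` because the subtracted term lies in `p • N_{t-1}`, and
does not change `f` modulo `p`.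
-/

open Polynomial Matrix

section

variable {D : Type*} [CommRing D] {n : Type*} [Fintype n] [DecidableEq n]

/-- The ideal `N_{(a)}(B)`. -/
noncomputable def annihIdeal (a : D) (B : Matrix n n D) : Ideal D[X] :=
  RingHom.ker ((Ideal.Quotient.mk (Ideal.span {a})).mapMatrix.comp (aeval B).toRingHom)

theorem mem_annihIdeal {a : D} {B : Matrix n n D} {f : D[X]} :
    f ∈ annihIdeal a B ↔ ∀ i j, a ∣ aeval B f i j := by
  simp only [annihIdeal, RingHom.mem_ker, RingHom.comp_apply, ← Matrix.ext_iff,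
    RingHom.mapMatrix_apply, map_apply, Matrix.zero_apply, AlgHom.toRingHom_eq_coe,
    RingHom.coe_coe, Ideal.Quotient.eq_zero_iff_mem, Ideal.mem_span_singleton]

theorem annihIdeal_one (B : Matrix n n D) : annihIdeal 1 B = ⊤ :=
  (Ideal.eq_top_iff_one _).2 <| mem_annihIdeal.2 fun _ _ => one_dvd _

theorem annihIdeal_anti {a b : D} (h : a ∣ b) (B : Matrix n n D) :
    annihIdeal b B ≤ annihIdeal a B := fun _ hf =>
  mem_annihIdeal.2 fun i j => h.trans (mem_annihIdeal.1 hf i j)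

theorem C_mem_annihIdeal (a : D) (B : Matrix n n D) : C a ∈ annihIdeal a B :=
  mem_annihIdeal.2 fun i j => by
    rw [aeval_C, algebraMap_matrix_apply]
    split_ifs <;> simp

theorem C_mul_mem_annihIdeal {a : D} {B : Matrix n n D} {f : D[X]} (b : D)
    (hf : f ∈ annihIdeal a B) : C b * f ∈ annihIdeal (b * a) B :=
  mem_annihIdeal.2 fun i j => by
    rw [← smul_eq_C_mul, map_smul, Matrix.smul_apply, smul_eq_mul]
    exact mul_dvd_mul_left b (mem_annihIdeal.1 hf i j)

end

section

variable {R : Type*} [CommRing R] {I : Ideal R[X]}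

theorem exists_monic_mem_natDegree_le_of_isCoprime {a : R} {f : R[X]} (ha : C a ∈ I)
    (hf : f ∈ I) (hcop : IsCoprime a f.leadingCoeff) :
    ∃ g ∈ I, g.Monic ∧ g.natDegree ≤ f.natDegree := by
  obtain ⟨u, v, huv⟩ := hcop
  have hg_le : (C v * f + C (u * a) * X ^ f.natDegree).natDegree ≤ f.natDegree :=
    natDegree_add_le_of_degree_le (natDegree_C_mul_le _ _)
      ((natDegree_C_mul_le _ _).trans (natDegree_X_pow_le _))
  have hg_coeff : (C v * f + C (u * a) * X ^ f.natDegree).coeff f.natDegree = 1 := by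
    rw [coeff_add, coeff_C_mul, coeff_C_mul, coeff_X_pow_self, coeff_natDegree]
    linear_combination huv
  refine ⟨_, I.add_mem (I.mul_mem_left _ hf) (I.mul_mem_right _ ?_),
    monic_of_natDegree_le_of_coeff_eq_one _ hg_le hg_coeff, hg_le⟩
  rw [C_mul]
  exact I.mul_mem_left _ ha

theorem exists_mem_degree_lt_of_dvd_leadingCoeff {p : R} {f ν : R[X]} (hf : f ∈ I)
    (hf0 : f ≠ 0) (hlc : p ∣ f.leadingCoeff) (hν : ν.Monic) (hνI : C p * ν ∈ I)
    (hdeg : ν.natDegree ≤ f.natDegree) : ∃ g ∈ I, g.degree < f.degree ∧ C p ∣ f - g := by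
  obtain ⟨c, hc⟩ := hlc
  have hlc0 : f.leadingCoeff ≠ 0 := leadingCoeff_ne_zero.2 hf0
  have : Nontrivial R := nontrivial_of_ne _ _ hlc0
  set h := C f.leadingCoeff * X ^ (f.natDegree - ν.natDegree) * ν
  have h_degree : h.degree = f.degree := by
    rw [hν.degree_mul, degree_C_mul_X_pow _ hlc0, degree_eq_natDegree hf0,
      degree_eq_natDegree hν.ne_zero]
    norm_cast
    omega
  have h_lc : h.leadingCoeff = f.leadingCoeff := by
    rw [leadingCoeff_mul_monic hν, leadingCoeff_C_mul_X_pow]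
  have h_eq : h = C c * X ^ (f.natDegree - ν.natDegree) * (C p * ν) := by
    simp only [h, hc, C_mul]
    ring
  refine ⟨f - h, I.sub_mem hf ?_, degree_sub_lt_left h_degree.symm hf0 h_lc.symm, ?_⟩
  · exact h_eq ▸ I.mul_mem_left _ hνI
  · rw [sub_sub_cancel, h_eq]
    exact (dvd_mul_right _ _).mul_left _

end

theorem exists_monic_mem_annihIdeal_natDegree_le {D : Type*} [CommRing D] [IsDomain D]
    [IsPrincipalIdealRing D] {n : Type*} [Fintype n] [DecidableEq n] {p : D} (hp : Prime p)
    (B : Matrix n n D) (t : ℕ) {f : D[X]} (hf : f ∈ annihIdeal (p ^ t) B) (hfp : ¬ C p ∣ f) :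
    ∃ g ∈ annihIdeal (p ^ t) B, g.Monic ∧ g.natDegree ≤ f.natDegree := by
  induction t generalizing f with
  | zero => exact ⟨1, by simp [annihIdeal_one], monic_one, by simp⟩
  | succ t ih =>
    induction hd : f.natDegree using Nat.strong_induction_on generalizing f with
    | _ d ihd =>
    by_cases hlc : p ∣ f.leadingCoeff
    · obtain ⟨ν, hνI, hν, hνdeg⟩ := ih (annihIdeal_anti (pow_dvd_pow p t.le_succ) B hf) hfp
      have hpνI : C p * ν ∈ annihIdeal (p ^ (t + 1)) B :=
        pow_succ' p t ▸ C_mul_mem_annihIdeal p hνI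
      obtain ⟨g, hgI, hgdeg, hfg⟩ := exists_mem_degree_lt_of_dvd_leadingCoeff hf
        (fun hf0 => hfp (hf0 ▸ dvd_zero _)) hlc hν hpνI hνdeg
      have hgp : ¬ C p ∣ g := fun hg => hfp (sub_add_cancel f g ▸ dvd_add hfg hg)
      have hlt : g.natDegree < d :=
        hd ▸ natDegree_lt_natDegree (fun hg0 => hgp (hg0 ▸ dvd_zero _)) hgdeg
      obtain ⟨h, hhI, hh, hhdeg⟩ := ihd _ hlt hgI hgp rfl
      exact ⟨h, hhI, hh, hhdeg.trans hlt.le⟩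
    · exact hd ▸ exists_monic_mem_natDegree_le_of_isCoprime (C_mem_annihIdeal _ B) hf
        (hp.irreducible.coprime_iff_not_dvd.2 hlc).pow_left

theorem stmt8_general (D : Type*) [CommRing D] [IsDomain D] [IsPrincipalIdealRing D]
    (n : ℕ) (p : D) (hp : Prime p) (B : Matrix (Fin n) (Fin n) D)
    (t : ℕ) (νt νt1 : Polynomial D)
    (hνt : νt.Monic ∧ (∀ i j, p ^ t ∣ Polynomial.aeval B νt i j) ∧
      ∀ g : Polynomial D, g.Monic → (∀ i j, p ^ t ∣ Polynomial.aeval B g i j) →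
        νt.natDegree ≤ g.natDegree)
    (hνt1 : νt1.Monic ∧ (∀ i j, p ^ (t - 1) ∣ Polynomial.aeval B νt1 i j) ∧
      ∀ g : Polynomial D, g.Monic → (∀ i j, p ^ (t - 1) ∣ Polynomial.aeval B g i j) →
        νt1.natDegree ≤ g.natDegree)
    (f : Polynomial D)
    (hf : ∀ i j, p ^ t ∣ Polynomial.aeval B f i j)
    (hfp : ¬ ∀ k, p ∣ f.coeff k) :
    νt1.natDegree ≤ νt.natDegree ∧ νt.natDegree ≤ f.natDegree := by
  obtain ⟨hνt_monic, hνt_mem, hνt_min⟩ := hνt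
  refine ⟨hνt1.2.2 νt hνt_monic fun i j => (pow_dvd_pow p (t.sub_le 1)).trans (hνt_mem i j),
    ?_⟩
  obtain ⟨g, hgN, hg_monic, hg_deg⟩ := exists_monic_mem_annihIdeal_natDegree_le hp B t
    (mem_annihIdeal.2 hf) (by rwa [C_dvd_iff_dvd_coeff])
  exact (hνt_min g hg_monic (mem_annihIdeal.1 hgN)).trans hg_deg

theorem stmt8 (D : Type*) [CommRing D] [IsDomain D] [IsPrincipalIdealRing D]
    (n : ℕ) (p : D) (hp : Prime p) (B : Matrix (Fin n) (Fin n) D)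
    (t : ℕ) (ht : 1 ≤ t) (νt νt1 : Polynomial D)
    (hνt : νt.Monic ∧ (∀ i j, p ^ t ∣ Polynomial.aeval B νt i j) ∧
      ∀ g : Polynomial D, g.Monic → (∀ i j, p ^ t ∣ Polynomial.aeval B g i j) →
        νt.natDegree ≤ g.natDegree)
    (hνt1 : νt1.Monic ∧ (∀ i j, p ^ (t - 1) ∣ Polynomial.aeval B νt1 i j) ∧
      ∀ g : Polynomial D, g.Monic → (∀ i j, p ^ (t - 1) ∣ Polynomial.aeval B g i j) →
        νt1.natDegree ≤ g.natDegree)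
    (f : Polynomial D)
    (hf : ∀ i j, p ^ t ∣ Polynomial.aeval B f i j)
    (hfp : ¬ ∀ k, p ∣ f.coeff k) :
    νt1.natDegree ≤ νt.natDegree ∧ νt.natDegree ≤ f.natDegree :=
  stmt8_general D n p hp B t νt νt1 hνt hνt1 f hf hfp
end

section
/- Let D be a principal ideal domain, p ∈ D prime, B ∈ M_n(D), and t ≥ 1. Then f ∈ N_{(p^t)}(B) if and only if there exists Q ∈ M_n(D[X]) with adj(X·I − B)·f(X) ≡ Q(X)·χ_B(X) (mod p^t), where the congruence is entrywise coefficientwise divisibility by p^t. -/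
/-!
Over any commutative ring `R`, `f(B) = 0` iff `f • 1 = Q * (X • 1 - B)` for some `Q`: under
`M_n(R[X]) ≃ M_n(R)[X]` this is the factor theorem for right division by `X - C B`, which holds
over noncommutative rings. Multiplying on the right by `adj(X • 1 - B)`, or conversely by
`X • 1 - B` and cancelling the monic `χ_B`, turns this into `f • adj = χ_B • Q`. The congruence
version follows by applying this over `R ⧸ (p ^ t)`, since matrices over `(R ⧸ I)[X]` lift to
`R[X]`.
-/

open Polynomial Matrix

namespace Polynomial

variable {S : Type*} [Ring S]

theorem exists_sub_C_eval_eq_mul_X_sub_C (g : S[X]) (a : S) :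
    ∃ q : S[X], g - C (g.eval a) = q * (X - C a) := by
  induction g using Polynomial.induction_on' with
  | add u v hu hv =>
    obtain ⟨qu, hqu⟩ := hu
    obtain ⟨qv, hqv⟩ := hv
    refine ⟨qu + qv, ?_⟩
    rw [eval_add, C_add, add_mul, ← hqu, ← hqv]
    abel
  | monomial k c =>
    refine ⟨C c * ∑ i ∈ Finset.range k, X ^ i * C a ^ (k - 1 - i), ?_⟩
    rw [mul_assoc, (commute_X (C a)).geom_sum₂_mul, eval_monomial,
      ← C_mul_X_pow_eq_monomial, mul_sub, ← C_pow, ← C_mul]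

theorem eval_eq_zero_iff_exists_eq_mul_X_sub_C {g : S[X]} {a : S} :
    g.eval a = 0 ↔ ∃ q : S[X], g = q * (X - C a) := by
  refine ⟨fun h => ?_, fun ⟨q, hq⟩ => hq ▸ eval_mul_X_sub_C a⟩
  simpa [h] using exists_sub_C_eval_eq_mul_X_sub_C g a

end Polynomial

namespace Matrix

theorem map_map_quotient_eq_zero_iff {R m n : Type*} [CommRing R] (I : Ideal R)
    (M : Matrix m n R[X]) :
    M.map (Polynomial.map (Ideal.Quotient.mk I)) = 0 ↔ ∀ i j k, (M i j).coeff k ∈ I := by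
  simp [← Matrix.ext_iff, Polynomial.ext_iff, Ideal.Quotient.eq_zero_iff_mem]

variable {R S : Type*} [CommRing R] [CommRing S] {n : Type*} [Fintype n] [DecidableEq n]

theorem aeval_map_map (φ : R →+* S) (B : Matrix n n R) (f : R[X]) :
    aeval (B.map φ) (f.map φ) = (aeval B f).map φ :=
  (map_aeval_eq_aeval_map (ψ := φ.mapMatrix)
    (by ext; simp [algebraMap_matrix_apply, apply_ite φ]) f B).symm

theorem map_smul_adjugate_charmatrix_sub_smul (φ : R →+* S) (B : Matrix n n R) (f : R[X])
    (Q : Matrix n n R[X]) :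
    (f • (charmatrix B).adjugate - B.charpoly • Q).map (Polynomial.map φ) =
      f.map φ • (charmatrix (B.map φ)).adjugate -
        (B.map φ).charpoly • Q.map (Polynomial.map φ) := by
  have hadj :
      (charmatrix (B.map φ)).adjugate = (charmatrix B).adjugate.map (Polynomial.map φ) := by
    rw [charmatrix_map, ← coe_mapRingHom, ← RingHom.mapMatrix_apply, ← RingHom.map_adjugate]
    rfl
  ext i j
  simp [hadj, charpoly_map]

theorem aeval_eq_zero_iff_exists_smul_one_eq_mul_charmatrix_s11 (B : Matrix n n R) (f : R[X]) :
    aeval B f = 0 ↔ ∃ Q : Matrix n n R[X], f • (1 : Matrix n n R[X]) = Q * charmatrix B := by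
  rw [← eval_map_algebraMap, eval_eq_zero_iff_exists_eq_mul_X_sub_C,
    matPolyEquiv.surjective.exists]
  refine exists_congr fun Q => ?_
  rw [← matPolyEquiv_smul_one, ← matPolyEquiv_charmatrix, ← map_mul,
    matPolyEquiv.injective.eq_iff]

theorem exists_smul_one_eq_mul_charmatrix_iff (B : Matrix n n R) (f : R[X]) :
    (∃ Q : Matrix n n R[X], f • (1 : Matrix n n R[X]) = Q * charmatrix B) ↔
      ∃ Q : Matrix n n R[X], f • (charmatrix B).adjugate = B.charpoly • Q := by
  refine exists_congr fun Q => ⟨fun h => ?_, fun h => ?_⟩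
  · rw [← one_mul (charmatrix B).adjugate, ← smul_mul, h, mul_assoc, mul_adjugate,
      Matrix.mul_smul, mul_one]
    rfl
  · have hχ : B.charpoly • (f • (1 : Matrix n n R[X])) = B.charpoly • (Q * charmatrix B) := by
      calc B.charpoly • (f • (1 : Matrix n n R[X]))
          = f • ((charmatrix B).adjugate * charmatrix B) := by
            rw [adjugate_mul, smul_comm]
            rfl
        _ = B.charpoly • (Q * charmatrix B) := by rw [← smul_mul, h, smul_mul]
    ext i j : 1
    exact (charpoly_monic B).isRegular.left (by simpa using congr($hχ i j))

theorem aeval_eq_zero_iff_exists_smul_adjugate_charmatrix_eq (B : Matrix n n R) (f : R[X]) :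
    aeval B f = 0 ↔ ∃ Q : Matrix n n R[X], f • (charmatrix B).adjugate = B.charpoly • Q :=
  (aeval_eq_zero_iff_exists_smul_one_eq_mul_charmatrix_s11 B f).trans
    (exists_smul_one_eq_mul_charmatrix_iff B f)

theorem forall_aeval_apply_mem_iff (I : Ideal R) (B : Matrix n n R) (f : R[X]) :
    (∀ i j, aeval B f i j ∈ I) ↔ ∃ Q : Matrix n n R[X], ∀ i j k,
      ((f • (charmatrix B).adjugate) i j - (B.charpoly • Q) i j).coeff k ∈ I := by
  set π := Ideal.Quotient.mk I
  have hQ_lift : Function.Surjective fun Q : Matrix n n R[X] => Q.map (Polynomial.map π) :=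
    fun Q' => ⟨Q'.map (Function.surjInv (map_surjective π Ideal.Quotient.mk_surjective)), by
      ext1 i j; exact Function.surjInv_eq _ _⟩
  calc (∀ i j, aeval B f i j ∈ I)
      ↔ aeval (B.map π) (f.map π) = 0 := by
        simp [aeval_map_map, ← Matrix.ext_iff, π, Ideal.Quotient.eq_zero_iff_mem]
    _ ↔ ∃ Q, (f • (charmatrix B).adjugate - B.charpoly • Q).map (Polynomial.map π) = 0 := by
        rw [aeval_eq_zero_iff_exists_smul_adjugate_charmatrix_eq, hQ_lift.exists]
        simp only [map_smul_adjugate_charmatrix_sub_smul, sub_eq_zero]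
    _ ↔ _ := by simp only [π, map_map_quotient_eq_zero_iff, sub_apply, coeff_sub]

end Matrix

theorem stmt11_general (D : Type*) [CommRing D]
    (n : ℕ) (p : D) (B : Matrix (Fin n) (Fin n) D)
    (t : ℕ) (f : Polynomial D) :
    (∀ i j, p ^ t ∣ Polynomial.aeval B f i j) ↔
      ∃ Q : Matrix (Fin n) (Fin n) (Polynomial D),
        ∀ i j k, p ^ t ∣
          ((f • (Matrix.charmatrix B).adjugate) i j - (B.charpoly • Q) i j).coeff k := by
  simpa only [Ideal.mem_span_singleton] using forall_aeval_apply_mem_iff (Ideal.span {p ^ t}) B f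

theorem stmt11 (D : Type*) [CommRing D] [IsDomain D] [IsPrincipalIdealRing D]
    (n : ℕ) (p : D) (hp : Prime p) (B : Matrix (Fin n) (Fin n) D)
    (t : ℕ) (ht : 1 ≤ t) (f : Polynomial D) :
    (∀ i j, p ^ t ∣ Polynomial.aeval B f i j) ↔
      ∃ Q : Matrix (Fin n) (Fin n) (Polynomial D),
        ∀ i j k, p ^ t ∣
          ((f • (Matrix.charmatrix B).adjugate) i j - (B.charpoly • Q) i j).coeff k :=
  stmt11_general D n p B t f
end

section
/- Let D be a principal ideal domain and B ∈ M_n(D) with minimal polynomial μ_B ∈ D[X] over the quotient field. Suppose p ∈ D is a prime element such that the reduction of μ_B modulo p is the minimal polynomial of the reduction of B modulo p. Then μ_B is a (p)-minimal polynomial of B, i.e., μ_B ∈ N_{(p)}(B) and every monic f ∈ N_{(p)}(B) has deg(f) ≥ deg(μ_B). -/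
/-!
Reduction modulo `p` commutes with evaluating a polynomial at a matrix, so `p` divides every entry
of `f(B)` exactly when `f̄(B̄) = 0`. Hence `μ_B ∈ N_{(p)}(B)` because `μ̄_B(B̄) = 0`, and a monic
`f ∈ N_{(p)}(B)` reduces to a monic annihilator of `B̄`, of degree at least `deg μ̄_B = deg μ_B`.
-/

open Polynomial Matrix

theorem Matrix.aeval_map_polynomial_map {R S : Type*} [CommRing R] [CommRing S] (φ : R →+* S)
    {n : Type*} [Fintype n] [DecidableEq n] (B : Matrix n n R) (f : R[X]) :
    aeval (B.map φ) (f.map φ) = (aeval B f).map φ := by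
  rw [aeval_def, eval₂_map, aeval_def]
  change _ = φ.mapMatrix _
  rw [hom_eval₂]
  congr 1
  ext x : 1
  simp [Matrix.algebraMap_eq_diagonal]

theorem Matrix.map_mk_span_singleton_eq_zero_iff {R : Type*} [CommRing R] {m n : Type*} (p : R)
    (M : Matrix m n R) : M.map (Ideal.Quotient.mk (Ideal.span {p})) = 0 ↔ ∀ i j, p ∣ M i j := by
  simp [← Matrix.ext_iff, Ideal.Quotient.eq_zero_iff_mem, Ideal.mem_span_singleton]

theorem Polynomial.monic_of_map_eq_minpoly_fractionRing {D : Type*} [CommRing D] [IsDomain D]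
    {n : Type*} [Fintype n] [DecidableEq n] {B : Matrix n n D} {μ : D[X]}
    (hμ : μ.map (algebraMap D (FractionRing D)) =
      minpoly (FractionRing D) (B.map (algebraMap D (FractionRing D)))) : μ.Monic :=
  monic_of_injective (IsFractionRing.injective D (FractionRing D))
    (hμ ▸ minpoly.monic (Algebra.IsIntegral.isIntegral _))

theorem stmt12_general (D : Type*) [CommRing D] [IsDomain D]
    (n : ℕ) (B : Matrix (Fin n) (Fin n) D) (p : D) (hp : Prime p)
    (μD : Polynomial D)
    (hμ : μD.map (algebraMap D (FractionRing D)) =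
      minpoly (FractionRing D) (B.map (algebraMap D (FractionRing D))))
    (hbar : (μD.map (Ideal.Quotient.mk (Ideal.span {p}))).Monic ∧
      Polynomial.aeval (B.map (Ideal.Quotient.mk (Ideal.span {p})))
        (μD.map (Ideal.Quotient.mk (Ideal.span {p}))) = 0 ∧
      ∀ g : Polynomial (D ⧸ Ideal.span {p}), g.Monic →
        Polynomial.aeval (B.map (Ideal.Quotient.mk (Ideal.span {p}))) g = 0 →
        (μD.map (Ideal.Quotient.mk (Ideal.span {p}))).natDegree ≤ g.natDegree) :
    (∀ i j, p ∣ Polynomial.aeval B μD i j) ∧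
    ∀ f : Polynomial D, f.Monic → (∀ i j, p ∣ Polynomial.aeval B f i j) →
      μD.natDegree ≤ f.natDegree := by
  obtain ⟨-, hμ_ann, hμ_min⟩ := hbar
  set φ := Ideal.Quotient.mk (Ideal.span {p})
  have mem_N_iff (f : D[X]) : (∀ i j, p ∣ aeval B f i j) ↔ aeval (B.map φ) (f.map φ) = 0 := by
    rw [Matrix.aeval_map_polynomial_map, Matrix.map_mk_span_singleton_eq_zero_iff]
  refine ⟨(mem_N_iff μD).mpr hμ_ann, fun f hf hfp => ?_⟩
  have : Nontrivial (D ⧸ Ideal.span {p}) :=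
    Ideal.Quotient.nontrivial_iff.mpr (by simpa using hp.not_isUnit)
  calc μD.natDegree = (μD.map φ).natDegree :=
        ((monic_of_map_eq_minpoly_fractionRing hμ).natDegree_map φ).symm
    _ ≤ (f.map φ).natDegree := hμ_min _ (hf.map φ) ((mem_N_iff f).mp hfp)
    _ = f.natDegree := hf.natDegree_map φ

theorem stmt12 (D : Type*) [CommRing D] [IsDomain D] [IsPrincipalIdealRing D]
    (n : ℕ) (hn : 0 < n) (B : Matrix (Fin n) (Fin n) D) (p : D) (hp : Prime p)
    (μD : Polynomial D)
    (hμ : μD.map (algebraMap D (FractionRing D)) =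
      minpoly (FractionRing D) (B.map (algebraMap D (FractionRing D))))
    (hbar : (μD.map (Ideal.Quotient.mk (Ideal.span {p}))).Monic ∧
      Polynomial.aeval (B.map (Ideal.Quotient.mk (Ideal.span {p})))
        (μD.map (Ideal.Quotient.mk (Ideal.span {p}))) = 0 ∧
      ∀ g : Polynomial (D ⧸ Ideal.span {p}), g.Monic →
        Polynomial.aeval (B.map (Ideal.Quotient.mk (Ideal.span {p}))) g = 0 →
        (μD.map (Ideal.Quotient.mk (Ideal.span {p}))).natDegree ≤ g.natDegree) :
    (∀ i j, p ∣ Polynomial.aeval B μD i j) ∧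
    ∀ f : Polynomial D, f.Monic → (∀ i j, p ∣ Polynomial.aeval B f i j) →
      μD.natDegree ≤ f.natDegree :=
  stmt12_general D n B p hp μD hμ hbar
end

section
/- Let D be a principal ideal domain, B ∈ M_n(D), K its quotient field, and T ∈ M_n(D) ∩ GL_n(K) with T·B·T^{-1} = C the rational canonical form of B. For every prime element p of D not dividing det(T), the reduction of C modulo p is similar (over the field D/pD) to the reduction of B modulo p, and hence the reduction of μ_B modulo p is the minimal polynomial of B modulo p. -/
/-!
Reducing `T * B = C * T` modulo `p` gives the similarity, because `det T` is a unit modulo `p`.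
For the minimal polynomials let `μₗ` be the last invariant factor. Each companion block of `C`
is killed by `μₗ`, so `μₗ(C) = 0`, hence `μₗ(B) = 0` (`T` is injective) and
`deg μ_B ≤ deg μₗ`. Conversely a monic `g` killing `B mod p` kills `C mod p`, in particular the
companion block of `μₗ mod p`; that block has the first basis vector as a cyclic vector, so
`deg g ≥ deg μₗ`. As `μ_B mod p` is monic and kills `B mod p`, it has the least degree.
-/

open Polynomial Matrix

/-- The companion matrix of a (monic) polynomial `q` of degree `m = q.natDegree`:
ones on the subdiagonal and the negated coefficients of `q` in the last column. -/
def companion {D : Type*} [CommRing D] (q : Polynomial D) :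
    Matrix (Fin q.natDegree) (Fin q.natDegree) D :=
  fun i j => if (j : ℕ) = q.natDegree - 1 then -q.coeff i
    else if (i : ℕ) = (j : ℕ) + 1 then 1 else 0

section Companion

variable {R : Type*} [CommRing R] {m : ℕ} {M : Matrix (Fin m) (Fin m) R}

/-- The shape of a companion matrix with an arbitrary last column. Unlike `companion`, it is
stable under `Matrix.map`, whose result has size `q.natDegree`, not `(q.map f).natDegree`. -/
def IsCompanionShape (M : Matrix (Fin m) (Fin m) R) : Prop :=
  ∀ i j : Fin m, (j : ℕ) ≠ m - 1 → M i j = if (i : ℕ) = j + 1 then 1 else 0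

lemma IsCompanionShape.map {S : Type*} [CommRing S] (hM : IsCompanionShape M) (f : R →+* S) :
    IsCompanionShape (M.map f) := fun i j hj => by
  rw [map_apply, hM i j hj, apply_ite f, map_one, map_zero]

lemma pow_mulVec_single_zero [NeZero m] (hM : IsCompanionShape M)
    {k : ℕ} (hk : k < m) : (M ^ k) *ᵥ Pi.single 0 1 = Pi.single ⟨k, hk⟩ 1 := by
  induction k with
  | zero => rw [pow_zero, one_mulVec]; rfl
  | succ k ih =>
    rw [pow_succ', ← mulVec_mulVec, ih (by omega), mulVec_single_one]
    funext i
    rw [col_apply, hM i ⟨k, by omega⟩ (by simp only; omega)]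
    simp [Pi.single_apply, Fin.ext_iff]

lemma aeval_mulVec_single_zero [NeZero m] (hM : IsCompanionShape M)
    {P : R[X]} (hP : P.natDegree < m) :
    aeval M P *ᵥ Pi.single 0 1 = fun i : Fin m => P.coeff i := by
  rw [aeval_eq_sum_range' hP, sum_mulVec]
  funext i
  rw [Finset.sum_apply, Finset.sum_eq_single_of_mem (i : ℕ) (Finset.mem_range.2 i.isLt)]
  · rw [smul_mulVec, pow_mulVec_single_zero hM i.isLt]
    simp
  · intro k hk hki
    rw [smul_mulVec, pow_mulVec_single_zero hM (Finset.mem_range.1 hk)]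
    simp [Fin.ext_iff, Ne.symm hki]

lemma aeval_eq_zero_of_mulVec_single_zero [NeZero m] (hM : IsCompanionShape M)
    {P : R[X]} (hP : aeval M P *ᵥ Pi.single 0 1 = 0) : aeval M P = 0 := by
  refine ext_of_mulVec_single fun j => ?_
  have hcomm : Commute (aeval M P) (M ^ (j : ℕ)) := by
    simpa using ((commute_X P).symm.map (aeval M)).pow_right j
  rw [← pow_mulVec_single_zero hM j.isLt, mulVec_mulVec, hcomm.eq, ← mulVec_mulVec, hP,
    mulVec_zero, zero_mulVec]

lemma le_natDegree_of_aeval_eq_zero [Nontrivial R] (hM : IsCompanionShape M)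
    {g : R[X]} (hg : g.Monic) (h : aeval M g = 0) : m ≤ g.natDegree := by
  by_contra! hlt
  have : NeZero m := ⟨by omega⟩
  have hcoeff := congrFun (aeval_mulVec_single_zero hM hlt) (⟨g.natDegree, hlt⟩ : Fin m)
  simp [h, hg.coeff_natDegree] at hcoeff

lemma isCompanionShape_companion (q : R[X]) : IsCompanionShape (companion q) :=
  fun i j hj => by simp [companion, hj]

lemma aeval_companion_self {q : R[X]} (hq : q.Monic) : aeval (companion q) q = 0 := by
  set m := q.natDegree with hm
  rcases Nat.eq_zero_or_pos m with h0 | hpos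
  · ext i
    exact absurd i.isLt (by omega)
  have : NeZero m := ⟨hpos.ne'⟩
  have hshape := isCompanionShape_companion q
  refine aeval_eq_zero_of_mulVec_single_zero hshape ?_
  have hlead : aeval (companion q) (X ^ m : R[X]) *ᵥ Pi.single 0 1 =
      fun i : Fin m => -q.coeff i := by
    have hsucc : companion q ^ m = companion q * companion q ^ (m - 1) := by
      rw [← pow_succ']; congr 1; omega
    rw [aeval_X_pow, hsucc, ← mulVec_mulVec, pow_mulVec_single_zero hshape (by omega),
      mulVec_single_one]
    funext i
    simp [companion, ← hm]
  have hdeg : q.eraseLead.natDegree < m := (eraseLead_natDegree_le q).trans_lt (by omega)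
  have htail := aeval_mulVec_single_zero hshape hdeg
  have hsplit : q = q.eraseLead + X ^ m := by
    conv_lhs => rw [← q.eraseLead_add_C_mul_X_pow]
    rw [hq.leadingCoeff, C_1, one_mul]
  rw [congrArg (aeval (companion q)) hsplit, map_add, add_mulVec, htail, hlead]
  funext i
  simp [eraseLead_coeff_of_ne _ i.isLt.ne]

end Companion

lemma SemiconjBy.aeval {R A : Type*} [CommSemiring R] [Semiring A] [Algebra R A] {T B C : A}
    (h : SemiconjBy T B C) (P : R[X]) : SemiconjBy T (aeval B P) (aeval C P) := by
  induction P using Polynomial.induction_on' with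
  | add P Q hP hQ => simpa only [map_add] using hP.add_right hQ
  | monomial k a =>
    simpa only [aeval_monomial] using
      SemiconjBy.mul_right (Algebra.commute_algebraMap_left a T).symm (h.pow_right k)

namespace Matrix

variable {R : Type*} [CommRing R] {n : Type*} [Fintype n] [DecidableEq n]
  {T B C : Matrix n n R}

lemma aeval_blockDiagonal' {ι : Type*} [Fintype ι] [DecidableEq ι] {mι : ι → Type*}
    [∀ i, Fintype (mι i)] [∀ i, DecidableEq (mι i)]
    (M : ∀ i, Matrix (mι i) (mι i) R) (P : R[X]) :
    aeval (blockDiagonal' M) P = blockDiagonal' fun i => aeval (M i) P := by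
  let F : (∀ i, Matrix (mι i) (mι i) R) →ₐ[R] Matrix (Σ i, mι i) (Σ i, mι i) R :=
    AlgHom.mk' (blockDiagonal'RingHom mι R) fun c N => blockDiagonal'_smul c N
  have hcomp : ∀ i, (aeval M P) i = aeval (M i) P := fun i =>
    (aeval_algHom_apply (Pi.evalAlgHom R (fun i => Matrix (mι i) (mι i) R) i) M P).symm
  exact (aeval_algHom_apply F M P).trans (congrArg blockDiagonal' (funext hcomp))

lemma aeval_reindex {m : Type*} [Fintype m] [DecidableEq m] (e : m ≃ n) (M : Matrix m m R)
    (P : R[X]) :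
    aeval (reindex e e M) P = reindex e e (aeval M P) :=
  aeval_algHom_apply (reindexAlgEquiv R R e : Matrix m m R →ₐ[R] Matrix n n R) M P

lemma aeval_eq_zero_of_semiconjBy_of_det_ne_zero [IsDomain R] (h : SemiconjBy T B C)
    (hT : T.det ≠ 0) {P : R[X]} (hC : aeval C P = 0) : aeval B P = 0 := by
  have hreg : IsLeftRegular T :=
    isLeftRegular_iff_mulVec_injective.2 (mulVec_injective_of_det_ne_zero hT)
  refine hreg ?_
  simp only [(h.aeval P).eq, hC, zero_mul, mul_zero]

lemma aeval_eq_zero_of_semiconjBy_of_isUnit_det (h : SemiconjBy T B C) (hT : IsUnit T.det)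
    {P : R[X]} (hB : aeval B P = 0) : aeval C P = 0 := by
  rw [← ((isUnit_iff_isUnit_det T).2 hT).mul_left_eq_zero, ← (h.aeval P).eq, hB, mul_zero]

lemma map_aeval {S : Type*} [CommRing S] (f : R →+* S) (M : Matrix n n R) (P : R[X]) :
    (aeval M P).map f = aeval (M.map f) (P.map f) :=
  map_aeval_eq_aeval_map (ψ := f.mapMatrix)
    (by ext; simp [algebraMap_matrix_apply, apply_ite f]) P M

end Matrix

section BlockDiagonal

variable {R : Type*} [CommRing R] {ι : Type*} [Fintype ι] [DecidableEq ι]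

lemma aeval_blockDiagonal'_companion_eq_zero {μ : ι → R[X]} (hμ : ∀ i, (μ i).Monic)
    {q : R[X]} (hdvd : ∀ i, μ i ∣ q) :
    aeval (blockDiagonal' fun i => companion (μ i)) q = 0 := by
  rw [aeval_blockDiagonal', ← blockDiagonal'_zero]
  congr 1
  funext i
  obtain ⟨c, rfl⟩ := hdvd i
  rw [map_mul, aeval_companion_self (hμ i), zero_mul, Pi.zero_apply]

lemma le_natDegree_of_aeval_blockDiagonal'_map_companion_eq_zero {S : Type*} [CommRing S]
    [Nontrivial S] (f : R →+* S) (μ : ι → R[X]) {g : S[X]} (hg : g.Monic)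
    (h : aeval (blockDiagonal' fun i => (companion (μ i)).map f) g = 0) (i : ι) :
    (μ i).natDegree ≤ g.natDegree := by
  refine le_natDegree_of_aeval_eq_zero ((isCompanionShape_companion (μ i)).map f) hg ?_
  rw [aeval_blockDiagonal'] at h
  ext a b
  simpa [blockDiagonal'_apply_eq] using congrFun₂ h ⟨i, a⟩ ⟨i, b⟩

end BlockDiagonal

section MinpolyOverField

variable {R K : Type*} [CommRing R] [Field K] [Algebra R K] [FaithfulSMul R K]
  {n : Type*} [Fintype n] [DecidableEq n] {B : Matrix n n R} {μB : R[X]}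

lemma monic_of_map_eq_minpoly
    (hμB : μB.map (algebraMap R K) = minpoly K (B.map (algebraMap R K))) : μB.Monic :=
  monic_of_injective (FaithfulSMul.algebraMap_injective R K)
    (hμB ▸ minpoly.monic (Algebra.IsIntegral.isIntegral _))

lemma aeval_eq_zero_of_map_eq_minpoly
    (hμB : μB.map (algebraMap R K) = minpoly K (B.map (algebraMap R K))) : aeval B μB = 0 := by
  apply Matrix.map_injective (FaithfulSMul.algebraMap_injective R K)
  dsimp only
  rw [map_aeval, hμB, minpoly.aeval, Matrix.map_zero _ (map_zero _)]

lemma natDegree_le_of_map_eq_minpoly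
    (hμB : μB.map (algebraMap R K) = minpoly K (B.map (algebraMap R K))) {P : R[X]}
    (hP : P ≠ 0) (hB : aeval B P = 0) : μB.natDegree ≤ P.natDegree := by
  have hinj := FaithfulSMul.algebraMap_injective R K
  have hdvd : μB.map (algebraMap R K) ∣ P.map (algebraMap R K) := by
    rw [hμB]
    refine minpoly.dvd K _ ?_
    rw [← map_aeval, hB, Matrix.map_zero _ (map_zero _)]
  simpa only [natDegree_map_eq_of_injective hinj] using
    natDegree_le_of_dvd hdvd ((Polynomial.map_ne_zero_iff hinj).2 hP)

end MinpolyOverField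

theorem stmt14_general (D : Type*) [CommRing D] [IsDomain D] [IsPrincipalIdealRing D]
    (n : ℕ) (hn : 0 < n) (B T C : Matrix (Fin n) (Fin n) D)
    (r : ℕ) (μ : Fin r → Polynomial D)
    (e : (Σ i : Fin r, Fin (μ i).natDegree) ≃ Fin n)
    (hmonic : ∀ i, (μ i).Monic)
    (hchain : ∀ i j : Fin r, i ≤ j → μ i ∣ μ j)
    (hC : C = Matrix.reindex e e (Matrix.blockDiagonal' (fun i => companion (μ i))))
    (hdet : T.det ≠ 0) (hsim : T * B = C * T)
    (μD : Polynomial D)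
    (hμ : μD.map (algebraMap D (FractionRing D)) =
      minpoly (FractionRing D) (B.map (algebraMap D (FractionRing D))))
    (p : D) (hp : Prime p) (hpdet : ¬ p ∣ T.det) :
    (∃ U : Matrix (Fin n) (Fin n) (D ⧸ Ideal.span {p}), IsUnit U.det ∧
        U * B.map (Ideal.Quotient.mk (Ideal.span {p})) =
          C.map (Ideal.Quotient.mk (Ideal.span {p})) * U) ∧
    ((μD.map (Ideal.Quotient.mk (Ideal.span {p}))).Monic ∧
      Polynomial.aeval (B.map (Ideal.Quotient.mk (Ideal.span {p})))
        (μD.map (Ideal.Quotient.mk (Ideal.span {p}))) = 0 ∧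
      ∀ g : Polynomial (D ⧸ Ideal.span {p}), g.Monic →
        Polynomial.aeval (B.map (Ideal.Quotient.mk (Ideal.span {p}))) g = 0 →
        (μD.map (Ideal.Quotient.mk (Ideal.span {p}))).natDegree ≤ g.natDegree) := by
  set π := Ideal.Quotient.mk (Ideal.span {p})
  have : (Ideal.span {p}).IsMaximal := PrincipalIdealRing.isMaximal_of_irreducible hp.irreducible
  let := Ideal.Quotient.field (Ideal.span {p})
  have hTp : IsUnit (T.map π).det := by
    rwa [← RingHom.mapMatrix_apply, ← RingHom.map_det, isUnit_iff_ne_zero, Ne,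
      Ideal.Quotient.eq_zero_iff_mem, Ideal.mem_span_singleton]
  have hsimp : SemiconjBy (T.map π) (B.map π) (C.map π) := by
    rw [SemiconjBy, ← Matrix.map_mul, ← Matrix.map_mul, hsim]
  obtain ⟨k, rfl⟩ : ∃ k, r = k + 1 :=
    ⟨r - 1, by have := (e.symm ⟨0, hn⟩).1.pos; omega⟩
  have hCμ : aeval C (μ (Fin.last k)) = 0 := by
    rw [hC, aeval_reindex, aeval_blockDiagonal'_companion_eq_zero hmonic
      fun i => hchain i _ (Fin.le_last i)]
    rfl
  have hBμ := Matrix.aeval_eq_zero_of_semiconjBy_of_det_ne_zero hsim hdet hCμ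
  have hCp : C.map π = reindex e e (blockDiagonal' fun i => (companion (μ i)).map π) := by
    rw [hC, ← blockDiagonal'_map _ _ (map_zero π)]
    rfl
  have hμmonic := monic_of_map_eq_minpoly hμ
  refine ⟨⟨T.map π, hTp, hsimp⟩, hμmonic.map π, ?_, fun g hg hBg => ?_⟩
  · rw [← Matrix.map_aeval, aeval_eq_zero_of_map_eq_minpoly hμ, Matrix.map_zero _ (map_zero π)]
  have hCg := Matrix.aeval_eq_zero_of_semiconjBy_of_isUnit_det hsimp hTp hBg
  rw [hCp, aeval_reindex] at hCg
  have hblocks : aeval (blockDiagonal' fun i => (companion (μ i)).map π) g = 0 :=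
    (reindex e e).injective (by rw [hCg]; rfl)
  calc (μD.map π).natDegree = μD.natDegree := hμmonic.natDegree_map π
    _ ≤ (μ (Fin.last k)).natDegree := natDegree_le_of_map_eq_minpoly hμ (hmonic _).ne_zero hBμ
    _ ≤ g.natDegree := le_natDegree_of_aeval_blockDiagonal'_map_companion_eq_zero π μ hg
        hblocks _

theorem stmt14 (D : Type*) [CommRing D] [IsDomain D] [IsPrincipalIdealRing D]
    (n : ℕ) (hn : 0 < n) (B T C : Matrix (Fin n) (Fin n) D)
    (r : ℕ) (μ : Fin r → Polynomial D)
    (e : (Σ i : Fin r, Fin (μ i).natDegree) ≃ Fin n)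
    (hmonic : ∀ i, (μ i).Monic) (hdegpos : ∀ i, 0 < (μ i).natDegree)
    (hchain : ∀ i j : Fin r, i ≤ j → μ i ∣ μ j)
    (hprod : (∏ i, μ i) = B.charpoly)
    (hC : C = Matrix.reindex e e (Matrix.blockDiagonal' (fun i => companion (μ i))))
    (hdet : T.det ≠ 0) (hsim : T * B = C * T)
    (μD : Polynomial D)
    (hμ : μD.map (algebraMap D (FractionRing D)) =
      minpoly (FractionRing D) (B.map (algebraMap D (FractionRing D))))
    (p : D) (hp : Prime p) (hpdet : ¬ p ∣ T.det) :
    (∃ U : Matrix (Fin n) (Fin n) (D ⧸ Ideal.span {p}), IsUnit U.det ∧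
        U * B.map (Ideal.Quotient.mk (Ideal.span {p})) =
          C.map (Ideal.Quotient.mk (Ideal.span {p})) * U) ∧
    ((μD.map (Ideal.Quotient.mk (Ideal.span {p}))).Monic ∧
      Polynomial.aeval (B.map (Ideal.Quotient.mk (Ideal.span {p})))
        (μD.map (Ideal.Quotient.mk (Ideal.span {p}))) = 0 ∧
      ∀ g : Polynomial (D ⧸ Ideal.span {p}), g.Monic →
        Polynomial.aeval (B.map (Ideal.Quotient.mk (Ideal.span {p}))) g = 0 →
        (μD.map (Ideal.Quotient.mk (Ideal.span {p}))).natDegree ≤ g.natDegree) :=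
  stmt14_general D n hn B T C r μ e hmonic hchain hC hdet hsim μD hμ p hp hpdet
end

section
/- Let D be a principal ideal domain, B ∈ M_n(D), and a = b·c with b, c ∈ D coprime nonzero elements. Then N_{(a)}(B) = c·N_{(b)}(B) + b·N_{(c)}(B). -/
/-!
`N_{(a)}(B)` is the preimage of `a • M_n(D)` under the linear map `f ↦ f(B)`, so the statement is
about an arbitrary linear map `φ`. Writing `1 = u b + v c`, any `x` with `φ x ∈ bc • ⊤` splits as
`x = c (v x) + b (u x)`, where `φ (v x) ∈ b • ⊤` and `φ (u x) ∈ c • ⊤`; the reverse inclusion is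
immediate.
-/

open Polynomial Pointwise

namespace Submodule

variable {R P M : Type*} [CommRing R] [AddCommMonoid P] [Module R P] [AddCommMonoid M]
  [Module R M]

theorem smul_top_le_smul_top_of_dvd {a a' : R} (h : a ∣ a') :
    a' • (⊤ : Submodule R M) ≤ a • ⊤ := by
  obtain ⟨k, rfl⟩ := h
  rw [mul_comm, mul_smul]
  exact smul_le_self_of_tower k _

theorem pointwise_smul_comap_le_comap_pointwise_smul (c : R) (φ : P →ₗ[R] M) (p : Submodule R M) :
    c • p.comap φ ≤ (c • p).comap φ := by
  rintro _ ⟨x, hx, rfl⟩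
  simpa only [mem_comap, DistribSMul.toLinearMap_apply, map_smul] using
    smul_mem_pointwise_smul _ c p hx

theorem comap_mul_smul_top_eq_sup {b c : R} (hbc : IsCoprime b c) (φ : P →ₗ[R] M) :
    ((b * c) • ⊤ : Submodule R M).comap φ =
      c • (b • ⊤ : Submodule R M).comap φ ⊔ b • (c • ⊤ : Submodule R M).comap φ := by
  refine le_antisymm (fun x hx ↦ ?_) (sup_le ?_ ?_)
  · obtain ⟨u, v, huv⟩ := hbc
    have hx_eq : x = c • (v • x) + b • (u • x) := by
      rw [smul_smul, smul_smul, ← add_smul, mul_comm c, mul_comm b, add_comm, huv, one_smul]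
    have hmem {a : R} (ha : a ∣ b * c) (r : R) : r • x ∈ (a • ⊤ : Submodule R M).comap φ :=
      smul_mem _ r (comap_mono (smul_top_le_smul_top_of_dvd ha) hx)
    rw [hx_eq]
    exact add_mem_sup (smul_mem_pointwise_smul _ c _ (hmem (dvd_mul_right b c) v))
      (smul_mem_pointwise_smul _ b _ (hmem (dvd_mul_left c b) u))
  · rw [mul_comm, mul_smul]
    exact pointwise_smul_comap_le_comap_pointwise_smul c φ _
  · rw [mul_smul]
    exact pointwise_smul_comap_le_comap_pointwise_smul b φ _

end Submodule

theorem Matrix.mem_smul_top_iff {m n R : Type*} [CommRing R] {a : R} {X : Matrix m n R} :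
    X ∈ a • (⊤ : Submodule R (Matrix m n R)) ↔ ∀ i j, a ∣ X i j := by
  refine ⟨?_, fun h ↦ ?_⟩
  · rintro ⟨Y, -, rfl⟩ i j
    exact ⟨Y i j, rfl⟩
  · choose Y hY using h
    exact Submodule.mem_smul_pointwise_iff_exists _ _ _ |>.mpr
      ⟨Matrix.of Y, Submodule.mem_top, by ext i j; exact (hY i j).symm⟩

theorem stmt16_general (D : Type*) [CommRing D]
    (n : ℕ) (B : Matrix (Fin n) (Fin n) D) (b c : D)
    (hbc : IsCoprime b c) (f : Polynomial D) :
    (∀ i j, b * c ∣ Polynomial.aeval B f i j) ↔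
      ∃ g h : Polynomial D, (∀ i j, b ∣ Polynomial.aeval B g i j) ∧
        (∀ i j, c ∣ Polynomial.aeval B h i j) ∧
        f = Polynomial.C c * g + Polynomial.C b * h := by
  have key := SetLike.ext_iff.mp
    (Submodule.comap_mul_smul_top_eq_sup hbc (aeval B).toLinearMap) f
  simp only [Submodule.mem_sup, Submodule.mem_smul_pointwise_iff_exists (M := D[X]),
    Submodule.mem_comap, AlgHom.toLinearMap_apply, Matrix.mem_smul_top_iff] at key
  rw [key]
  constructor
  · rintro ⟨_, ⟨g, hg, rfl⟩, _, ⟨h, hh, rfl⟩, rfl⟩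
    exact ⟨g, h, hg, hh, by simp only [smul_eq_C_mul]⟩
  · rintro ⟨g, h, hg, hh, rfl⟩
    exact ⟨_, ⟨g, hg, rfl⟩, _, ⟨h, hh, rfl⟩, by simp only [smul_eq_C_mul]⟩

theorem stmt16 (D : Type*) [CommRing D] [IsDomain D] [IsPrincipalIdealRing D]
    (n : ℕ) (B : Matrix (Fin n) (Fin n) D) (b c : D)
    (hb : b ≠ 0) (hc : c ≠ 0) (hbc : IsCoprime b c) (f : Polynomial D) :
    (∀ i j, b * c ∣ Polynomial.aeval B f i j) ↔
      ∃ g h : Polynomial D, (∀ i j, b ∣ Polynomial.aeval B g i j) ∧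
        (∀ i j, c ∣ Polynomial.aeval B h i j) ∧
        f = Polynomial.C c * g + Polynomial.C b * h :=
  stmt16_general D n B b c hbc f
end
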